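/- arXiv:2103.05604 — 5 statements merged into one kernel-verified Lean document; each statement's English description precedes it below -/
import Mathlib

section
/- Run Algorithm 2 on an unweighted SPPT instance with distortion at most μ. If at time t a job is moved from bin F to bin P (the procedure UponHeavyF is called), then for every real x ≥ 0 the covered volume is unchanged: cov(x, t) = cov(x, t⁻). -/
open MeasureTheory
open scoped Classical

noncomputable section

/-- A configuration of Algorithm 2: the pending jobs are kept in two bins,
a full bin `QF` and a partial bin `QP`; each bin carries a bijective priority map
onto `{1, …, size of bin}`, and every pending job has a remaining processing time. -/
structure Config (n : ℕ) where
  QF : Finset (Fin n)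
  QP : Finset (Fin n)
  rem : Fin n → ℝ
  prF : Fin n → ℕ
  prP : Fin n → ℕ
  disj : Disjoint QF QP
  bijF : Set.BijOn prF (QF : Set (Fin n)) (Set.Icc 1 QF.card)
  bijP : Set.BijOn prP (QP : Set (Fin n)) (Set.Icc 1 QP.card)

variable {n : ℕ}

/-- `wbase q`: the number of jobs in `q`'s own bin whose priority is at most that
of `q` (for unit weights this is the total weight of `base(q)`). -/
def wbase (C : Config n) (q : Fin n) : ℕ :=
  if q ∈ C.QF then (C.QF.filter fun a => C.prF a ≤ C.prF q).card
  else (C.QP.filter fun a => C.prP a ≤ C.prP q).card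

/-- The volume covered by a bar at height `x`: the sum over pending jobs `q`
of the remaining processing time of `q` if `x ≥ wbase q`, and `0` otherwise. -/
def cov (C : Config n) (x : ℝ) : ℝ :=
  ∑ q ∈ C.QF ∪ C.QP, if (wbase C q : ℝ) ≤ x then C.rem q else 0

/-- `V`: the total remaining volume of pending jobs. -/
def vol (C : Config n) : ℝ :=
  ∑ q ∈ C.QF ∪ C.QP, C.rem q

/-- The ordered pair `(q₁, q₂)` of jobs of the full bin is a violation if `q₁` has
higher priority but `μ · p̃ q₂ ≤ p̃ q₁`. -/
def IsViolation (μ : ℝ) (pt : Fin n → ℝ) (C : Config n) (q₁ q₂ : Fin n) : Prop :=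
  q₁ ∈ C.QF ∧ q₂ ∈ C.QF ∧ C.prF q₂ < C.prF q₁ ∧ μ * pt q₂ ≤ pt q₁

/-- No ordered pair of jobs of the full bin forms a violation. -/
def NoViolations (μ : ℝ) (pt : Fin n → ℝ) (C : Config n) : Prop :=
  ∀ q₁ q₂, ¬ IsViolation μ pt C q₁ q₂

/-- The priorities of the full bin after releasing job `q`: `q` is first inserted at the
top (priority `|QF| + 1`), and then the cyclic rotation fixing all the violations
involving `q` is applied: `q` receives the lowest priority of a job in violation with
it, each job in violation with `q` moves up to the priority of the next higher-priority
violating job (the highest-priority one receiving `q`'s top priority `|QF| + 1`),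
and all other priorities are unchanged. -/
def rotatedPr (μ : ℝ) (pt : Fin n → ℝ) (C : Config n) (q : Fin n) : Fin n → ℕ :=
  fun a =>
    if a = q then
      WithBot.unbotD (C.QF.card + 1) ((C.QF.filter fun b => μ * pt b ≤ pt q).image C.prF).min
    else if a ∈ C.QF.filter (fun b => μ * pt b ≤ pt q) then
      WithBot.unbotD (C.QF.card + 1)
        ((((C.QF.filter fun b => μ * pt b ≤ pt q).filter
            fun b => C.prF a < C.prF b).image C.prF).min)
    else C.prF a

/-- `UponJobRelease q` of Algorithm 2 turns configuration `C` into `C'`: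
the new job `q` (full, so its remaining time is `p q`) enters the full bin and the
rotation fixing all violations involving `q` is applied. -/
def ReleaseStep (μ : ℝ) (p pt : Fin n → ℝ) (C C' : Config n) (q : Fin n) : Prop :=
  q ∉ C.QF ∧ q ∉ C.QP ∧
  C'.QF = insert q C.QF ∧ C'.QP = C.QP ∧
  C'.rem q = p q ∧ (∀ a, a ≠ q → C'.rem a = C.rem a) ∧
  (∀ a ∈ C'.QF, C'.prF a = rotatedPr μ pt C q a) ∧
  (∀ a ∈ C.QP, C'.prP a = C.prP a)

/-- `UponHeavyF` of Algorithm 2 turns configuration `C` into `C'`: it is called as soon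
as `|QF| > |QP|` (so `|QF| = |QP| + 1`), and it moves the top-priority job of the full
bin to the top priority of the partial bin (LIFO). -/
def MoveStep (C C' : Config n) (q : Fin n) : Prop :=
  C.QF.card = C.QP.card + 1 ∧ q ∈ C.QF ∧ C.prF q = C.QF.card ∧
  C'.QF = C.QF.erase q ∧ C'.QP = insert q C.QP ∧ C'.rem = C.rem ∧
  (∀ a ∈ C'.QF, C'.prF a = C.prF a) ∧ (∀ a ∈ C.QP, C'.prP a = C.prP a) ∧
  C'.prP q = C.QP.card + 1

/-- Processing for a duration `d`: the top-priority job of the partial bin is processed,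
decreasing its remaining time by `d`. -/
def ProcessStep (C C' : Config n) (q : Fin n) (d : ℝ) : Prop :=
  C.QF.card ≤ C.QP.card ∧ q ∈ C.QP ∧ C.prP q = C.QP.card ∧
  0 ≤ d ∧ d ≤ C.rem q ∧
  C'.QF = C.QF ∧ C'.QP = C.QP ∧ C'.prF = C.prF ∧ C'.prP = C.prP ∧
  C'.rem q = C.rem q - d ∧ (∀ a, a ≠ q → C'.rem a = C.rem a)

/-- A fully processed job (the top-priority job of the partial bin, with zero
remaining time) is completed and leaves the system. -/
def CompleteStep (C C' : Config n) (q : Fin n) : Prop :=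
  q ∈ C.QP ∧ C.prP q = C.QP.card ∧ C.rem q = 0 ∧
  C'.QF = C.QF ∧ C'.QP = C.QP.erase q ∧ C'.prF = C.prF ∧
  (∀ a ∈ C'.QP, C'.prP a = C.prP a) ∧ C'.rem = C.rem

theorem Set.BijOn.card_filter_le_eq_of_Icc_one {α : Type*} {s : Finset α} {f : α → ℕ}
    (hf : Set.BijOn f s (Set.Icc 1 s.card)) {a : α} (ha : a ∈ s) :
    (s.filter fun b => f b ≤ f a).card = f a := by
  have himage : (s.filter fun b => f b ≤ f a).image f = Finset.Icc 1 (f a) := by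
    ext x
    simp only [Finset.mem_image, Finset.mem_filter, Finset.mem_Icc]
    constructor
    · rintro ⟨b, ⟨hb, hba⟩, rfl⟩
      exact ⟨(hf.mapsTo hb).1, hba⟩
    · rintro ⟨h1x, hxa⟩
      obtain ⟨b, hb, rfl⟩ := hf.surjOn ⟨h1x, hxa.trans (hf.mapsTo ha).2⟩
      exact ⟨b, ⟨hb, hxa⟩, rfl⟩
  have hinj : Set.InjOn f (s.filter fun b => f b ≤ f a) :=
    hf.injOn.mono (Finset.coe_subset.mpr (Finset.filter_subset _ _))
  rw [← Finset.card_image_of_injOn hinj, himage, Nat.card_Icc, Nat.add_sub_cancel]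

namespace Config

theorem wbase_of_mem_QF {C : Config n} {a : Fin n} (ha : a ∈ C.QF) : wbase C a = C.prF a := by
  rw [wbase, if_pos ha, C.bijF.card_filter_le_eq_of_Icc_one ha]

theorem wbase_of_mem_QP {C : Config n} {a : Fin n} (ha : a ∈ C.QP) : wbase C a = C.prP a := by
  rw [wbase, if_neg (Finset.disjoint_right.mp C.disj ha),
    C.bijP.card_filter_le_eq_of_Icc_one ha]

theorem cov_eq_of_wbase_eq {C C' : Config n} (hpend : C'.QF ∪ C'.QP = C.QF ∪ C.QP)
    (hrem : C'.rem = C.rem) (hwbase : ∀ a ∈ C.QF ∪ C.QP, wbase C' a = wbase C a) (x : ℝ) :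
    cov C' x = cov C x := by
  unfold cov
  rw [hpend, hrem]
  exact Finset.sum_congr rfl fun a ha => by rw [hwbase a ha]

end Config

namespace MoveStep

variable {C C' : Config n} {q : Fin n}

theorem pending_eq (h : MoveStep C C' q) : C'.QF ∪ C'.QP = C.QF ∪ C.QP := by
  obtain ⟨-, hqF, -, hQF', hQP', -⟩ := h
  rw [hQF', hQP', Finset.union_insert, ← Finset.insert_union, Finset.insert_erase hqF]

-- The moved job keeps its rank: it is on top of `F`, of size `|P| + 1`, and lands on top of
-- `P ∪ {q}`.
theorem wbase_eq (h : MoveStep C C' q) {a : Fin n} (ha : a ∈ C.QF ∪ C.QP) :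
    wbase C' a = wbase C a := by
  obtain ⟨hcard, hqF, hprq, hQF', hQP', -, hprF, hprP, hprPq⟩ := h
  by_cases haq : a = q
  · subst haq
    rw [Config.wbase_of_mem_QF hqF, Config.wbase_of_mem_QP (by simp [hQP']), hprPq, hprq, hcard]
  rcases Finset.mem_union.mp ha with haF | haP
  · have haF' : a ∈ C'.QF := by simp [hQF', haq, haF]
    rw [Config.wbase_of_mem_QF haF, Config.wbase_of_mem_QF haF', hprF a haF']
  · rw [Config.wbase_of_mem_QP haP, Config.wbase_of_mem_QP (by simp [hQP', haP]), hprP a haP]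

end MoveStep

theorem move_preserves_cov_general
    (n : ℕ)
    (C C' : Config n) (q : Fin n)
    (hstep : MoveStep C C' q) :
    ∀ x : ℝ, 0 ≤ x → cov C' x = cov C x := by
  intro x _
  have hrem : C'.rem = C.rem := hstep.2.2.2.2.2.1
  exact Config.cov_eq_of_wbase_eq hstep.pending_eq hrem (fun _ ha => hstep.wbase_eq ha) x

/-- In a run of Algorithm 2 on an unweighted SPPT instance with
distortion at most `μ`, if a job is moved from bin `F` to bin `P` (the procedure
`UponHeavyF` is called), then for every `x ≥ 0` the covered volume is unchanged:
`cov(x, t) = cov(x, t⁻)`. -/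
theorem move_preserves_cov
    (n : ℕ) (μ : ℝ) (p pt : Fin n → ℝ)
    (hp : ∀ q, 0 < p q) (hpt : ∀ q, 0 < pt q)
    (hdist : ∀ q, pt q ≤ p q ∧ p q < μ * pt q)
    (C C' : Config n) (q : Fin n)
    (hstep : MoveStep C C' q) :
    ∀ x : ℝ, 0 ≤ x → cov C' x = cov C x :=
  move_preserves_cov_general n C C' q hstep
end
end

section
/- Run Algorithm 2 on an unweighted SPPT instance with distortion at most μ. If a job q is released at time t (the procedure UponJobRelease(q) is called), then for every real x ≥ 0 the covered volume does not decrease: cov(x, t) ≥ cov(x, t⁻). -/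
open MeasureTheory
open scoped Classical

noncomputable section

variable {n : ℕ}

/-! The partial bin is untouched, and in the full bin, whose jobs are all full, `wbase` is just
the priority. The release only raises the priorities of the jobs `b` in violation with `q`, each
to the old priority of the next one, while `q` takes the lowest of them. So of the jobs at or
below a height `x`, at most one climbs above it, and then `q` lands at or below `x`; as
`p b < μ p̃ b ≤ p̃ q ≤ p q`, swapping that job for `q` does not decrease the covered volume. -/

open Finset

lemma card_filter_le_apply_of_bijOn {ι : Type*} {s : Finset ι} {f : ι → ℕ} {k : ℕ}
    (hf : Set.BijOn f s (Set.Icc 1 k)) {a : ι} (ha : a ∈ s) :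
    #{b ∈ s | f b ≤ f a} = f a := by
  have hfa := hf.mapsTo ha
  calc #{b ∈ s | f b ≤ f a} = #(Icc 1 (f a)) := by
        refine card_nbij f (fun b hb => ?_) (hf.injOn.mono fun b hb => (mem_filter.1 hb).1)
          (fun m hm => ?_)
        · obtain ⟨hbs, hba⟩ := mem_filter.1 hb
          exact mem_Icc.2 ⟨(hf.mapsTo hbs).1, hba⟩
        · obtain ⟨h1, hm⟩ := mem_Icc.1 hm
          obtain ⟨b, hbs, rfl⟩ := hf.surjOn ⟨h1, hm.trans hfa.2⟩
          exact ⟨b, mem_filter.2 ⟨hbs, hm⟩, rfl⟩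
    _ = f a := by simp

theorem sum_filter_le_sum_filter_insert_of_rotation {ι α : Type*} [DecidableEq ι]
    [LinearOrder α] {s S : Finset ι} {q : ι} {f g : ι → α} {w : ι → ℝ} (x : α)
    (hq : q ∉ s) (hf : Set.InjOn f s) (hfix : ∀ a ∈ s, a ∉ S → g a = f a)
    (hgq : ∀ b ∈ S, g q ≤ f b) (hg : ∀ a ∈ S, ∀ b ∈ S, f a < f b → g a ≤ f b)
    (hw : ∀ a ∈ S, w a ≤ w q) (hw0 : ∀ a ∈ insert q s, 0 ≤ w a) :
    ∑ a ∈ s with f a ≤ x, w a ≤ ∑ a ∈ insert q s with g a ≤ x, w a := by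
  set φ : ι → ι := fun a => if g a ≤ x then a else q with hφ
  have hleave : ∀ a ∈ s, f a ≤ x → ¬ g a ≤ x → a ∈ S := fun a ha hfa hga =>
    by_contra fun haS => hga (hfix a ha haS ▸ hfa)
  have hmaps : ∀ a ∈ {a ∈ s | f a ≤ x}, φ a ∈ {b ∈ insert q s | g b ≤ x} := by
    intro a ha
    obtain ⟨has, hfa⟩ := mem_filter.1 ha
    by_cases hga : g a ≤ x
    · simp only [hφ, if_pos hga, mem_filter, mem_insert, has, or_true, hga, and_self]
    · simp only [hφ, if_neg hga, mem_filter, mem_insert_self, true_and]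
      exact (hgq a (hleave a has hfa hga)).trans hfa
  have hinj : Set.InjOn φ ({a ∈ s | f a ≤ x} : Finset ι) := by
    intro a ha b hb hab
    obtain ⟨has, hfa⟩ := mem_filter.1 ha
    obtain ⟨hbs, hfb⟩ := mem_filter.1 hb
    by_cases hga : g a ≤ x <;> by_cases hgb : g b ≤ x <;>
      simp only [hφ, hga, hgb, if_true, if_false] at hab
    · exact hab
    · exact absurd (hab ▸ has) hq
    · exact absurd (hab ▸ hbs) hq
    · have haS := hleave a has hfa hga
      have hbS := hleave b hbs hfb hgb
      rcases lt_trichotomy (f a) (f b) with h | h | h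
      · exact absurd ((hg a haS b hbS h).trans hfb) hga
      · exact hf has hbs h
      · exact absurd ((hg b hbS a haS h).trans hfa) hgb
  calc ∑ a ∈ s with f a ≤ x, w a ≤ ∑ a ∈ s with f a ≤ x, w (φ a) := by
        refine sum_le_sum fun a ha => ?_
        obtain ⟨has, hfa⟩ := mem_filter.1 ha
        by_cases hga : g a ≤ x
        · simp only [hφ, if_pos hga, le_refl]
        · simpa only [hφ, if_neg hga] using hw a (hleave a has hfa hga)
    _ = ∑ b ∈ image φ {a ∈ s | f a ≤ x}, w b := (sum_image hinj).symm
    _ ≤ ∑ a ∈ insert q s with g a ≤ x, w a :=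
        sum_le_sum_of_subset_of_nonneg (image_subset_iff.2 hmaps)
          fun b hb _ => hw0 b (mem_filter.1 hb).1

lemma wbase_eq_prF (C : Config n) {a : Fin n} (ha : a ∈ C.QF) : wbase C a = C.prF a := by
  rw [wbase, if_pos ha, card_filter_le_apply_of_bijOn C.bijF ha]

lemma cov_eq_sum_QF_add_sum_QP (C : Config n) (x : ℝ) :
    cov C x = (∑ a ∈ C.QF with (C.prF a : ℝ) ≤ x, C.rem a)
      + ∑ a ∈ C.QP, if (wbase C a : ℝ) ≤ x then C.rem a else 0 := by
  rw [cov, sum_union C.disj, sum_filter]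
  congr 1
  exact sum_congr rfl fun a ha => by rw [wbase_eq_prF C ha]

/- `Finset.min` is `WithTop`-valued; `rotatedPr` reads it through `WithBot.unbotD`, both types
being `Option`, so `unbotD d s.min` is the minimum of a nonempty `s`. -/
lemma unbotD_min_le {α : Type*} [LinearOrder α] {s : Finset α} {m : α} (d : α) (hm : m ∈ s) :
    WithBot.unbotD d s.min ≤ m := by
  obtain ⟨b, hb⟩ := min_of_mem hm
  have hbm := min_le hm
  rw [hb] at hbm ⊢
  exact WithTop.coe_le_coe.1 hbm

section rotatedPr

variable {μ : ℝ} {pt : Fin n → ℝ} {C : Config n} {q : Fin n}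

lemma rotatedPr_self_le {b : Fin n} (hb : b ∈ C.QF.filter fun b => μ * pt b ≤ pt q) :
    rotatedPr μ pt C q q ≤ C.prF b := by
  rw [rotatedPr, if_pos rfl]
  exact unbotD_min_le _ (mem_image_of_mem _ hb)

lemma rotatedPr_le_of_lt (hq : q ∉ C.QF) {a b : Fin n}
    (ha : a ∈ C.QF.filter fun b => μ * pt b ≤ pt q)
    (hb : b ∈ C.QF.filter fun b => μ * pt b ≤ pt q) (hab : C.prF a < C.prF b) :
    rotatedPr μ pt C q a ≤ C.prF b := by
  have haq : a ≠ q := fun h => hq (h ▸ (mem_filter.1 ha).1)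
  rw [rotatedPr, if_neg haq, if_pos ha]
  exact unbotD_min_le _ (mem_image_of_mem _ (mem_filter.2 ⟨hb, hab⟩))

lemma rotatedPr_of_not_mem {a : Fin n} (haq : a ≠ q)
    (ha : a ∉ C.QF.filter fun b => μ * pt b ≤ pt q) :
    rotatedPr μ pt C q a = C.prF a := by
  rw [rotatedPr, if_neg haq, if_neg ha]

end rotatedPr

namespace ReleaseStep

variable {μ : ℝ} {p pt : Fin n → ℝ} {C C' : Config n} {q : Fin n}

lemma sum_QP_eq (hstep : ReleaseStep μ p pt C C' q) (x : ℝ) :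
    (∑ a ∈ C'.QP, if (wbase C' a : ℝ) ≤ x then C'.rem a else 0)
      = ∑ a ∈ C.QP, if (wbase C a : ℝ) ≤ x then C.rem a else 0 := by
  obtain ⟨hqF, hqP, hQF', hQP', -, hrem', -, hprP'⟩ := hstep
  rw [hQP']
  refine sum_congr rfl fun a ha => ?_
  have haq : a ≠ q := fun h => hqP (h ▸ ha)
  have haF : a ∉ C.QF := disjoint_right.1 C.disj ha
  have haF' : a ∉ C'.QF := by simp [hQF', haq, haF]
  have hwbase : wbase C' a = wbase C a := by
    rw [wbase, wbase, if_neg haF, if_neg haF', hQP']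
    exact congrArg card (filter_congr fun b hb => by rw [hprP' b hb, hprP' a ha])
  rw [hwbase, hrem' a haq]

lemma sum_QF_eq (hstep : ReleaseStep μ p pt C C' q) (hfull : ∀ a ∈ C.QF, C.rem a = p a)
    (x : ℝ) :
    ∑ a ∈ C'.QF with (C'.prF a : ℝ) ≤ x, C'.rem a
      = ∑ a ∈ insert q C.QF with (rotatedPr μ pt C q a : ℝ) ≤ x, p a := by
  obtain ⟨-, -, hQF', -, hremq, hrem', hprF', -⟩ := hstep
  rw [sum_filter, sum_filter, ← hQF']
  refine sum_congr rfl fun a ha => ?_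
  rw [hprF' a ha]
  rcases eq_or_ne a q with rfl | haq
  · rw [hremq]
  · rw [hrem' a haq, hfull a (by simpa [hQF', haq] using ha)]

end ReleaseStep

theorem release_cov_mono_general
    (n : ℕ) (μ : ℝ) (p pt : Fin n → ℝ)
    (hp : ∀ q, 0 < p q)
    (hdist : ∀ q, pt q ≤ p q ∧ p q < μ * pt q)
    (C C' : Config n) (q : Fin n)
    (hfull : ∀ a ∈ C.QF, C.rem a = p a)
    (hstep : ReleaseStep μ p pt C C' q) :
    ∀ x : ℝ, 0 ≤ x → cov C x ≤ cov C' x := by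
  intro x _
  rw [cov_eq_sum_QF_add_sum_QP, cov_eq_sum_QF_add_sum_QP, hstep.sum_QP_eq x]
  gcongr ?_ + _
  rw [sum_congr rfl fun a ha => hfull a (mem_filter.1 ha).1, hstep.sum_QF_eq hfull x]
  have hqF : q ∉ C.QF := hstep.1
  have hp_le : ∀ b ∈ C.QF.filter fun b => μ * pt b ≤ pt q, p b ≤ p q := fun b hb => by
    linarith [(mem_filter.1 hb).2, hdist b, (hdist q).1]
  exact sum_filter_le_sum_filter_insert_of_rotation x hqF
    (Nat.cast_injective.comp_injOn C.bijF.injOn)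
    (fun a ha haS => by rw [rotatedPr_of_not_mem (ne_of_mem_of_not_mem ha hqF) haS])
    (fun b hb => by exact_mod_cast rotatedPr_self_le hb)
    (fun a ha b hb hab => by exact_mod_cast rotatedPr_le_of_lt hqF ha hb (by exact_mod_cast hab))
    hp_le (fun a _ => (hp a).le)

/-- In a run of Algorithm 2 on an unweighted SPPT instance with
distortion at most `μ`, if a job `q` is released at time `t` (the procedure
`UponJobRelease(q)` is called; the jobs of the full bin, being full, have their whole
processing time remaining), then for every `x ≥ 0` the covered volume does not
decrease: `cov(x, t) ≥ cov(x, t⁻)`. -/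
theorem release_cov_mono
    (n : ℕ) (μ : ℝ) (p pt : Fin n → ℝ)
    (hp : ∀ q, 0 < p q) (hpt : ∀ q, 0 < pt q)
    (hdist : ∀ q, pt q ≤ p q ∧ p q < μ * pt q)
    (C C' : Config n) (q : Fin n)
    (hfull : ∀ a ∈ C.QF, C.rem a = p a)
    (hrem : ∀ a, 0 ≤ C.rem a)
    (hstep : ReleaseStep μ p pt C C' q) :
    ∀ x : ℝ, 0 ≤ x → cov C x ≤ cov C' x :=
  release_cov_mono_general n μ p pt hp hdist C C' q hfull hstep
end
end

section
/- Run Algorithm 2 on an unweighted SPPT instance with distortion at most μ. For any real x ≥ 0 and time t, if cov(x,t) is strictly decreasing at t due to the algorithm's processing of a job (i.e., the job currently being processed has positive volume covered by x), then cov(x,t) = V(t), the total remaining processing time of all jobs pending in the algorithm at t. -/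
open MeasureTheory
open scoped Classical

noncomputable section

variable {n : ℕ}

/-! The balance invariant `|Q_F| ≤ |Q_P|` bounds the `wbase` of every pending job by `|Q_P|`,
and this bound is attained by the processed job, the top of `Q_P`. So once the bar covers the
processed job, it covers every pending job. -/

theorem wbase_le_max_card (C : Config n) (a : Fin n) :
    wbase C a ≤ max C.QF.card C.QP.card := by
  unfold wbase
  split_ifs
  · exact (Finset.card_filter_le _ _).trans (le_max_left _ _)
  · exact (Finset.card_filter_le _ _).trans (le_max_right _ _)

theorem wbase_eq_card_QP_of_top (C : Config n) {q : Fin n} (hq : q ∈ C.QP)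
    (htop : C.prP q = C.QP.card) : wbase C q = C.QP.card := by
  have hqF : q ∉ C.QF := Finset.disjoint_right.mp C.disj hq
  rw [wbase, if_neg hqF, Finset.filter_true_of_mem]
  intro a ha
  exact htop ▸ (C.bijP.mapsTo (Finset.mem_coe.mpr ha)).2

theorem cov_eq_vol_of_forall_wbase_le (C : Config n) {x : ℝ}
    (h : ∀ a ∈ C.QF ∪ C.QP, (wbase C a : ℝ) ≤ x) : cov C x = vol C :=
  Finset.sum_congr rfl fun a ha => if_pos (h a ha)

theorem processing_covers_everything_general
    (n : ℕ)
    (C : Config n)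
    (hbal : C.QF.card ≤ C.QP.card)
    (x : ℝ)
    (q : Fin n) (hq : q ∈ C.QP) (htop : C.prP q = C.QP.card)
    (hcovered : (wbase C q : ℝ) ≤ x) :
    cov C x = vol C := by
  refine cov_eq_vol_of_forall_wbase_le C fun a _ => le_trans ?_ hcovered
  rw [wbase_eq_card_QP_of_top C hq htop, ← max_eq_right hbal]
  exact_mod_cast wbase_le_max_card C a

/-- In a run of Algorithm 2 on an unweighted SPPT instance with
distortion at most `μ` (so that `|Q_F| ≤ |Q_P|`), if `cov(x, t)` is strictly
decreasing at `t` due to the processing of a job — i.e. the currently processed job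
(the top-priority job of the partial bin) has positive volume covered by the bar `x` —
then `cov(x, t) = V(t)`. -/
theorem processing_covers_everything
    (n : ℕ) (μ : ℝ) (p pt : Fin n → ℝ)
    (hp : ∀ q, 0 < p q) (hpt : ∀ q, 0 < pt q)
    (hdist : ∀ q, pt q ≤ p q ∧ p q < μ * pt q)
    (C : Config n)
    (hbal : C.QF.card ≤ C.QP.card)
    (x : ℝ) (hx : 0 ≤ x)
    (q : Fin n) (hq : q ∈ C.QP) (htop : C.prP q = C.QP.card)
    (hcovered : (wbase C q : ℝ) ≤ x) (hpos : 0 < C.rem q) :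
    cov C x = vol C :=
  processing_covers_everything_general n C hbal x q hq htop hcovered
end
end

section
/- Run Algorithm 3 on an SPPT instance with distortion at most μ and let θ = ⌈μ²⌉. If a job q is released at time t, then for every real x ≥ 0: (1) cov(x, t) ≥ cov(x, t⁻), and (2) cov(x + θ·w(q), t) ≥ cov(x, t⁻) + p(q). -/
open MeasureTheory
open scoped Classical

noncomputable section

/-- A configuration of Algorithm 3: for each weight class `i` (jobs `q` with
`cls q = i`) there is a superbin consisting of a full bin (the class-`i` part of `QF`)
and a partial bin (the class-`i` part of `QP`), each carrying a bijective priority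
map onto `{1, …, size of that bin}`. -/
structure WConfig (n : ℕ) (cls : Fin n → ℤ) where
  QF : Finset (Fin n)
  QP : Finset (Fin n)
  rem : Fin n → ℝ
  prF : Fin n → ℕ
  prP : Fin n → ℕ
  disj : Disjoint QF QP
  bijF : ∀ i : ℤ, Set.BijOn prF ((QF.filter fun a => cls a = i) : Set (Fin n))
      (Set.Icc 1 (QF.filter fun a => cls a = i).card)
  bijP : ∀ i : ℤ, Set.BijOn prP ((QP.filter fun a => cls a = i) : Set (Fin n))
      (Set.Icc 1 (QP.filter fun a => cls a = i).card)

variable {n : ℕ} {cls : Fin n → ℤ}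

/-- `wbase q`: the total weight of the jobs in `q`'s own bin (same side, same weight
class) whose priority is at most that of `q`. -/
def wbaseW (w : Fin n → ℝ) (C : WConfig n cls) (q : Fin n) : ℝ :=
  if q ∈ C.QF then
    ∑ a ∈ C.QF.filter (fun a => cls a = cls q ∧ C.prF a ≤ C.prF q), w a
  else
    ∑ a ∈ C.QP.filter (fun a => cls a = cls q ∧ C.prP a ≤ C.prP q), w a

/-- The volume covered by a bar at height `x`: the sum over all pending jobs `q`
(of all superbins) of the remaining time of `q` if `x ≥ wbase q`, else `0`. -/
def covW (w : Fin n → ℝ) (C : WConfig n cls) (x : ℝ) : ℝ :=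
  ∑ q ∈ C.QF ∪ C.QP, if wbaseW w C q ≤ x then C.rem q else 0

/-- `V`: the total remaining volume of pending jobs. -/
def volW (C : WConfig n cls) : ℝ :=
  ∑ q ∈ C.QF ∪ C.QP, C.rem q

/-- Total weight of the full bin of superbin `i`. -/
def binWeightF (w : Fin n → ℝ) (C : WConfig n cls) (i : ℤ) : ℝ :=
  ∑ a ∈ C.QF.filter (fun a => cls a = i), w a

/-- Total weight of the partial bin of superbin `i`. -/
def binWeightP (w : Fin n → ℝ) (C : WConfig n cls) (i : ℤ) : ℝ :=
  ∑ a ∈ C.QP.filter (fun a => cls a = i), w a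

/-- The priorities of the full bins after releasing job `q` into the full bin of its
superbin: `q` is inserted at the top and the cyclic rotation fixing all violations
involving `q` (inside `q`'s own class) is applied. -/
def rotatedPrW (μ : ℝ) (pt : Fin n → ℝ) (C : WConfig n cls) (q : Fin n) : Fin n → ℕ :=
  fun a =>
    if a = q then
      WithBot.unbotD ((C.QF.filter fun b => cls b = cls q).card + 1)
        ((C.QF.filter fun b => cls b = cls q ∧ μ * pt b ≤ pt q).image C.prF).min
    else if a ∈ C.QF.filter (fun b => cls b = cls q ∧ μ * pt b ≤ pt q) then
      WithBot.unbotD ((C.QF.filter fun b => cls b = cls q).card + 1)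
        ((((C.QF.filter fun b => cls b = cls q ∧ μ * pt b ≤ pt q).filter
            fun b => C.prF a < C.prF b).image C.prF).min)
    else C.prF a

/-- Release of job `q` in Algorithm 3: `q` (full) enters the full bin of its superbin
with top priority and the rotation fixing all violations involving `q` is applied. -/
def WReleaseStep (μ : ℝ) (p pt : Fin n → ℝ) (C C' : WConfig n cls) (q : Fin n) : Prop :=
  q ∉ C.QF ∧ q ∉ C.QP ∧
  C'.QF = insert q C.QF ∧ C'.QP = C.QP ∧
  C'.rem q = p q ∧ (∀ a, a ≠ q → C'.rem a = C.rem a) ∧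
  (∀ a ∈ C'.QF, C'.prF a = rotatedPrW μ pt C q a) ∧
  (∀ a ∈ C.QP, C'.prP a = C.prP a)

/-- `UponHeavyF i` of Algorithm 3: called as soon as the full bin of superbin `i`
outweighs its partial bin; the top-priority job of `F^i` moves to the top priority of
`P^i` (LIFO). -/
def WMoveStep (C C' : WConfig n cls) (i : ℤ) (q : Fin n) : Prop :=
  (C.QF.filter fun a => cls a = i).card = (C.QP.filter fun a => cls a = i).card + 1 ∧
  q ∈ C.QF ∧ cls q = i ∧ C.prF q = (C.QF.filter fun a => cls a = i).card ∧
  C'.QF = C.QF.erase q ∧ C'.QP = insert q C.QP ∧ C'.rem = C.rem ∧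
  (∀ a ∈ C'.QF, C'.prF a = C.prF a) ∧ (∀ a ∈ C.QP, C'.prP a = C.prP a) ∧
  C'.prP q = (C.QP.filter fun a => cls a = i).card + 1

/-- Processing for a duration `d` in Algorithm 3: the processed job `q` is the
top-priority job of the partial bin of maximum total weight. -/
def WProcessStep (w : Fin n → ℝ) (C C' : WConfig n cls) (q : Fin n) (d : ℝ) : Prop :=
  (∀ i, binWeightF w C i ≤ binWeightP w C i) ∧
  q ∈ C.QP ∧ C.prP q = (C.QP.filter fun a => cls a = cls q).card ∧
  (∀ i, binWeightP w C i ≤ binWeightP w C (cls q)) ∧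
  0 ≤ d ∧ d ≤ C.rem q ∧
  C'.QF = C.QF ∧ C'.QP = C.QP ∧ C'.prF = C.prF ∧ C'.prP = C.prP ∧
  C'.rem q = C.rem q - d ∧ (∀ a, a ≠ q → C'.rem a = C.rem a)

/-- A fully processed job is completed and leaves the system. -/
def WCompleteStep (C C' : WConfig n cls) (q : Fin n) : Prop :=
  q ∈ C.QP ∧ C.prP q = (C.QP.filter fun a => cls a = cls q).card ∧ C.rem q = 0 ∧
  C'.QF = C.QF ∧ C'.QP = C.QP.erase q ∧ C'.prF = C.prF ∧
  (∀ a ∈ C'.QP, C'.prP a = C.prP a) ∧ C'.rem = C.rem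


/-
Inside the superbin of `q` every full job has `wbase = priority · w(q)`, so a bar at height `x`
covers exactly its jobs of priority `≤ ⌊x / w(q)⌋`, while the rest of the system is untouched by
the release. The rotation inserts `q` at the lowest slot of the chain of jobs it violates and
moves each of them up to the next slot of the chain. At any level at most one violator, the
topmost covered one, drops out, and then `q`, which is longer than any violator, is covered in
its place: this is (1). For (2) raise the level by `θ` slots. If a violator sits in the new
slots, every covered job stays covered and so does `q`; if the bin is exhausted, everything is
covered; otherwise the `θ` new slots hold non-violators of length `> p̃(q)/μ` each, worth
`≥ θ p̃(q)/μ ≥ μ p̃(q) > p(q)` together, and (1) at the higher level finishes the count.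
-/

open Finset

namespace Finset

theorem card_filter_mem_of_bijOn {α : Type*} {T : Finset α} {f : α → ℕ} {I : Finset ℕ}
    (hbij : Set.BijOn f T (Set.Icc 1 #T)) (hI : (I : Set ℕ) ⊆ Set.Icc 1 #T) :
    #{a ∈ T | f a ∈ I} = #I :=
  card_nbij f (fun a ha => (mem_filter.mp ha).2)
    (hbij.injOn.mono (coe_subset.mpr (filter_subset _ _)))
    (fun j hj => by
      obtain ⟨a, haT, rfl⟩ := hbij.surjOn (hI hj)
      exact ⟨a, mem_filter.mpr ⟨haT, hj⟩, rfl⟩)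

theorem sum_filter_le_add_eq {α : Type*} (T : Finset α) (f : α → ℕ) (p : α → ℝ) (N θ : ℕ) :
    ∑ a ∈ T with f a ≤ N + θ, p a =
      ∑ a ∈ T with f a ≤ N, p a + ∑ a ∈ T with f a ∈ Ioc N (N + θ), p a := by
  rw [← sum_union (disjoint_filter.mpr fun a _ h1 h2 => by rw [mem_Ioc] at h2; omega),
    ← filter_or]
  exact sum_congr (filter_congr fun a _ => by rw [mem_Ioc]; omega) fun _ _ => rfl

theorem mul_le_sum_filter_Ioc {α : Type*} {T : Finset α} {f : α → ℕ} {p : α → ℝ} {c : ℝ}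
    {N θ : ℕ} (hbij : Set.BijOn f T (Set.Icc 1 #T)) (hθ : N + θ ≤ #T)
    (hc : ∀ a ∈ T, f a ∈ Ioc N (N + θ) → c ≤ p a) :
    θ * c ≤ ∑ a ∈ T with f a ∈ Ioc N (N + θ), p a := by
  have hcard : #{a ∈ T | f a ∈ Ioc N (N + θ)} = θ := by
    rw [card_filter_mem_of_bijOn hbij fun j hj => ?_, Nat.card_Ioc, Nat.add_sub_cancel_left]
    obtain ⟨h1, h2⟩ := mem_Ioc.mp hj
    exact ⟨by omega, by omega⟩
  have := card_nsmul_le_sum _ p c fun a ha => hc a (mem_filter.mp ha).1 (mem_filter.mp ha).2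
  rwa [hcard, nsmul_eq_mul] at this

/- `s.min : WithTop ℕ` is `none` exactly when `s = ∅`; `rotatedPrW` reads it through
`WithBot.unbotD`, so the default `d` is taken on the empty set. -/
theorem unbotD_min_le_of_mem {s : Finset ℕ} (d : ℕ) {x : ℕ} (hx : x ∈ s) :
    WithBot.unbotD d s.min ≤ x := by
  rw [← coe_min' ⟨x, hx⟩]
  exact s.min'_le x hx

theorem unbotD_min_le {s : Finset ℕ} {d : ℕ} (h : ∀ x ∈ s, x ≤ d) :
    WithBot.unbotD d s.min ≤ d := by
  rcases s.eq_empty_or_nonempty with rfl | hs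
  · rfl
  · rw [← coe_min' hs]
    exact h _ (s.min'_mem hs)

end Finset

/-- `pr'` arises from the priorities `pr` on `T` by inserting `q` into the chain `S ⊆ T`:
`q` takes a slot no higher than any element of `S`, each element of `S` moves up at most to
the next slot of `S`, the other elements of `T` keep their slots, and nothing goes above
`#T + 1`. -/
structure IsChainShift {α : Type*} (T S : Finset α) (pr pr' : α → ℕ) (q : α) : Prop where
  notMem : q ∉ T
  apply_self_le : ∀ b ∈ S, pr' q ≤ pr b
  apply_self_le_card : pr' q ≤ #T + 1
  apply_le_of_lt : ∀ a ∈ S, ∀ b ∈ S, pr a < pr b → pr' a ≤ pr b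
  apply_le_card : ∀ a ∈ S, pr' a ≤ #T + 1
  apply_of_notMem : ∀ a ∈ T, a ∉ S → pr' a = pr a

namespace IsChainShift

variable {α : Type*} {T S : Finset α} {pr pr' : α → ℕ} {q : α} {p : α → ℝ}

theorem mem_of_lt_apply (h : IsChainShift T S pr pr' q) {a : α} (ha : a ∈ T)
    (hlt : pr a < pr' a) : a ∈ S := by
  by_contra haS
  exact hlt.ne' (h.apply_of_notMem a ha haS)

theorem eq_of_le_of_lt_apply (h : IsChainShift T S pr pr' q) (hinj : Set.InjOn pr T)
    {N : ℕ} {a b : α} (ha : a ∈ T) (ha' : pr a ≤ N) (ha'' : N < pr' a)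
    (hb : b ∈ T) (hb' : pr b ≤ N) (hb'' : N < pr' b) : a = b := by
  have haS := h.mem_of_lt_apply ha (by omega)
  have hbS := h.mem_of_lt_apply hb (by omega)
  refine hinj ha hb (le_antisymm ?_ ?_)
  · by_contra! hlt
    exact absurd (h.apply_le_of_lt b hbS a haS hlt) (by omega)
  · by_contra! hlt
    exact absurd (h.apply_le_of_lt a haS b hbS hlt) (by omega)

variable [DecidableEq α]

theorem apply_le_card_add_one (h : IsChainShift T S pr pr' q)
    (hmaps : Set.MapsTo pr T (Set.Icc 1 #T)) {a : α} (ha : a ∈ insert q T) :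
    pr' a ≤ #T + 1 := by
  rcases mem_insert.mp ha with rfl | haT
  · exact h.apply_self_le_card
  by_cases haS : a ∈ S
  · exact h.apply_le_card a haS
  · rw [h.apply_of_notMem a haT haS]
    exact (hmaps haT).2.trans (Nat.le_succ _)

theorem sum_filter_le_sum_filter (h : IsChainShift T S pr pr' q) (hinj : Set.InjOn pr T)
    (hp : ∀ a ∈ insert q T, 0 ≤ p a) (hS : ∀ a ∈ S, p a ≤ p q) (N : ℕ) :
    ∑ a ∈ T with pr a ≤ N, p a ≤ ∑ a ∈ insert q T with pr' a ≤ N, p a := by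
  by_cases hlost : ∃ a₀ ∈ T, pr a₀ ≤ N ∧ N < pr' a₀
  · obtain ⟨a₀, ha₀, ha₀', ha₀''⟩ := hlost
    have hsub : {a ∈ T | pr a ≤ N} ⊆ insert a₀ {a ∈ T | pr' a ≤ N} := by
      intro a ha
      obtain ⟨haT, ha'⟩ := mem_filter.mp ha
      by_cases ha'' : pr' a ≤ N
      · exact mem_insert_of_mem (mem_filter.mpr ⟨haT, ha''⟩)
      · rw [h.eq_of_le_of_lt_apply hinj haT ha' (not_le.mp ha'') ha₀ ha₀' ha₀'']
        exact mem_insert_self _ _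
    have hq : pr' q ≤ N := (h.apply_self_le a₀ (h.mem_of_lt_apply ha₀ (by omega))).trans ha₀'
    calc ∑ a ∈ T with pr a ≤ N, p a
        ≤ ∑ a ∈ insert a₀ {a ∈ T | pr' a ≤ N}, p a :=
          sum_le_sum_of_subset_of_nonneg hsub fun a ha _ => by
            rcases mem_insert.mp ha with rfl | ha
            · exact hp a (mem_insert_of_mem ha₀)
            · exact hp a (mem_insert_of_mem (mem_filter.mp ha).1)
      _ = p a₀ + ∑ a ∈ T with pr' a ≤ N, p a :=
          sum_insert (by simp only [mem_filter]; omega)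
      _ ≤ p q + ∑ a ∈ T with pr' a ≤ N, p a := by
          gcongr; exact hS a₀ (h.mem_of_lt_apply ha₀ (by omega))
      _ = ∑ a ∈ insert q T with pr' a ≤ N, p a := by
          rw [filter_insert, if_pos hq,
            sum_insert fun hmem => h.notMem (mem_filter.mp hmem).1]
  · push Not at hlost
    refine sum_le_sum_of_subset_of_nonneg (fun a ha => ?_) fun a ha _ => hp a (mem_filter.mp ha).1
    obtain ⟨haT, ha'⟩ := mem_filter.mp ha
    exact mem_filter.mpr ⟨mem_insert_of_mem haT, hlost a haT ha'⟩

theorem sum_filter_add_le_sum_filter (h : IsChainShift T S pr pr' q)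
    (hbij : Set.BijOn pr T (Set.Icc 1 #T)) (hp : ∀ a ∈ insert q T, 0 ≤ p a)
    (hS : ∀ a ∈ S, p a ≤ p q) {c : ℝ} {θ : ℕ}
    (hTS : ∀ a ∈ T, a ∉ S → c ≤ p a) (hq : p q ≤ θ * c) (N : ℕ) :
    ∑ a ∈ T with pr a ≤ N, p a + p q ≤ ∑ a ∈ insert q T with pr' a ≤ N + θ, p a := by
  have hpT : ∀ a ∈ T, 0 ≤ p a := fun a ha => hp a (mem_insert_of_mem ha)
  rw [add_comm]
  rcases lt_or_ge #T (N + θ) with hbig | hsmall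
  · have hall : {a ∈ insert q T | pr' a ≤ N + θ} = insert q T :=
      filter_eq_self.mpr fun a ha => (h.apply_le_card_add_one hbij.mapsTo ha).trans hbig
    rw [hall, sum_insert h.notMem]
    exact add_le_add le_rfl (sum_le_sum_of_subset_of_nonneg (filter_subset _ _)
      fun a ha _ => hpT a ha)
  by_cases hviol : ∃ b ∈ S, N < pr b ∧ pr b ≤ N + θ
  · -- a slot of `S` in `(N, N + θ]` keeps all of `{pr ≤ N}` and `q` below `N + θ`
    obtain ⟨b, hbS, hNb, hbN⟩ := hviol
    have hsub : {a ∈ T | pr a ≤ N} ⊆ {a ∈ T | pr' a ≤ N + θ} := by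
      intro a ha
      obtain ⟨haT, ha'⟩ := mem_filter.mp ha
      refine mem_filter.mpr ⟨haT, ?_⟩
      by_cases haS : a ∈ S
      · exact (h.apply_le_of_lt a haS b hbS (by omega)).trans hbN
      · rw [h.apply_of_notMem a haT haS]; omega
    rw [filter_insert, if_pos ((h.apply_self_le b hbS).trans hbN),
      sum_insert fun hmem => h.notMem (mem_filter.mp hmem).1]
    exact add_le_add le_rfl (sum_le_sum_of_subset_of_nonneg hsub
      fun a ha _ => hpT a (mem_filter.mp ha).1)
  · -- otherwise the `θ` slots in `(N, N + θ]` hold elements outside `S`, each worth `≥ c`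
    push Not at hviol
    have hB : p q ≤ ∑ a ∈ T with pr a ∈ Ioc N (N + θ), p a :=
      hq.trans (mul_le_sum_filter_Ioc hbij hsmall fun a haT haI => hTS a haT fun haS =>
        (hviol a haS (mem_Ioc.mp haI).1).not_ge (mem_Ioc.mp haI).2)
    calc p q + ∑ a ∈ T with pr a ≤ N, p a
        ≤ ∑ a ∈ T with pr a ≤ N + θ, p a := by rw [sum_filter_le_add_eq]; linarith
      _ ≤ ∑ a ∈ insert q T with pr' a ≤ N + θ, p a :=
          h.sum_filter_le_sum_filter hbij.injOn hp hS (N + θ)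

end IsChainShift

theorem mul_le_natCeil_sq_mul_div {μ b : ℝ} (hμ : 0 < μ) (hb : 0 ≤ b) :
    μ * b ≤ ⌈μ ^ 2⌉₊ * (b / μ) :=
  calc μ * b = μ ^ 2 * (b / μ) := by field_simp
    _ ≤ ⌈μ ^ 2⌉₊ * (b / μ) := by gcongr; exact Nat.le_ceil _

theorem natCast_mul_le_iff_le_floor {j : ℕ} {W y : ℝ} (hW : 0 < W) (hy : 0 ≤ y) :
    (j : ℝ) * W ≤ y ↔ j ≤ ⌊y / W⌋₊ := by
  rw [Nat.le_floor_iff (div_nonneg hy hW.le), le_div_iff₀ hW]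

theorem wbaseW_eq_of_mem_QF {w : Fin n → ℝ} (hw : ∀ a, w a = 2 ^ cls a) (C : WConfig n cls)
    {a : Fin n} (ha : a ∈ C.QF) : wbaseW w C a = C.prF a * 2 ^ cls a := by
  have hbij := C.bijF (cls a)
  have hfilter : C.QF.filter (fun b => cls b = cls a ∧ C.prF b ≤ C.prF a) =
      {b ∈ C.QF.filter (fun b => cls b = cls a) | C.prF b ∈ Icc 1 (C.prF a)} := by
    ext b
    simp only [mem_filter, mem_Icc, and_assoc]
    refine and_congr_right fun hb => and_congr_right fun hcls => ⟨fun h => ⟨?_, h⟩, And.right⟩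
    exact (hbij.mapsTo (mem_filter.mpr ⟨hb, hcls⟩)).1
  have hIcc : (Icc 1 (C.prF a) : Set ℕ) ⊆ Set.Icc 1 #(C.QF.filter fun b => cls b = cls a) := by
    rw [coe_Icc]
    exact Set.Icc_subset_Icc_right (hbij.mapsTo (mem_filter.mpr ⟨ha, rfl⟩)).2
  rw [wbaseW, if_pos ha, hfilter, sum_congr rfl fun b hb => by
      rw [hw b, (mem_filter.mp (mem_filter.mp hb).1).2],
    sum_const, card_filter_mem_of_bijOn hbij hIcc, Nat.card_Icc, nsmul_eq_mul,
    Nat.add_sub_cancel]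

def restCovW (w : Fin n → ℝ) (C : WConfig n cls) (i : ℤ) (y : ℝ) : ℝ :=
  ∑ a ∈ (C.QF ∪ C.QP) \ C.QF.filter (fun a => cls a = i),
    if wbaseW w C a ≤ y then C.rem a else 0

theorem restCovW_mono {w : Fin n → ℝ} {C : WConfig n cls} (hrem : ∀ a, 0 ≤ C.rem a) (i : ℤ) :
    Monotone (restCovW w C i) := fun y y' hyy' =>
  sum_le_sum fun a _ => by
    split_ifs with h h'
    · exact le_rfl
    · exact absurd (h.trans hyy') h'
    · exact hrem a
    · exact le_rfl

theorem covW_eq_restCovW_add {w p : Fin n → ℝ} (hw : ∀ a, w a = 2 ^ cls a) (C : WConfig n cls)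
    (hfull : ∀ a ∈ C.QF, C.rem a = p a) (i : ℤ) {y : ℝ} (hy : 0 ≤ y) :
    covW w C y = restCovW w C i y +
      ∑ a ∈ C.QF.filter (fun a => cls a = i) with C.prF a ≤ ⌊y / 2 ^ i⌋₊, p a := by
  have hsub : C.QF.filter (fun a => cls a = i) ⊆ C.QF ∪ C.QP :=
    (filter_subset _ _).trans subset_union_left
  rw [covW, restCovW, ← sum_sdiff hsub, sum_filter fun a => C.prF a ≤ ⌊y / 2 ^ i⌋₊]
  congr 1
  refine sum_congr rfl fun a ha => ?_
  obtain ⟨haF, rfl⟩ := mem_filter.mp ha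
  rw [wbaseW_eq_of_mem_QF hw C haF, hfull a haF]
  exact if_congr (natCast_mul_le_iff_le_floor (zpow_pos two_pos _) hy) rfl rfl

theorem rotatedPrW_of_notMem {μ : ℝ} {pt : Fin n → ℝ} {C : WConfig n cls} {q a : Fin n}
    (haq : a ≠ q) (ha : a ∉ C.QF.filter fun b => cls b = cls q ∧ μ * pt b ≤ pt q) :
    rotatedPrW μ pt C q a = C.prF a := by
  rw [rotatedPrW, if_neg haq, if_neg ha]

theorem le_of_mem_violators {μ : ℝ} {p pt : Fin n → ℝ} (hdist : ∀ a, pt a ≤ p a ∧ p a < μ * pt a)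
    {C : WConfig n cls} {q a : Fin n}
    (ha : a ∈ C.QF.filter fun b => cls b = cls q ∧ μ * pt b ≤ pt q) : p a ≤ p q := by
  linarith [(mem_filter.mp ha).2.2, hdist a, hdist q]

namespace WReleaseStep

variable {μ : ℝ} {p pt : Fin n → ℝ} {C C' : WConfig n cls} {q : Fin n}

theorem filter_QF_cls_eq (h : WReleaseStep μ p pt C C' q) :
    C'.QF.filter (fun a => cls a = cls q) = insert q (C.QF.filter fun a => cls a = cls q) := by
  rw [h.2.2.1, filter_insert, if_pos rfl]

theorem rem_eq_of_mem_QF (h : WReleaseStep μ p pt C C' q) (hfull : ∀ a ∈ C.QF, C.rem a = p a) :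
    ∀ a ∈ C'.QF, C'.rem a = p a := by
  obtain ⟨hqF, -, hQF, -, hremq, hrem, -⟩ := h
  intro a ha
  rw [hQF] at ha
  rcases mem_insert.mp ha with rfl | ha
  · exact hremq
  · rw [hrem a (ne_of_mem_of_not_mem ha hqF), hfull a ha]

theorem isChainShift (h : WReleaseStep μ p pt C C' q) :
    IsChainShift (C.QF.filter fun b => cls b = cls q)
      (C.QF.filter fun b => cls b = cls q ∧ μ * pt b ≤ pt q) C.prF C'.prF q := by
  obtain ⟨hqF, -, hQF, -, -, -, hprF, -⟩ := h
  set T := C.QF.filter fun b => cls b = cls q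
  set S := C.QF.filter fun b => cls b = cls q ∧ μ * pt b ≤ pt q
  have hprF' : ∀ a ∈ insert q T, C'.prF a = rotatedPrW μ pt C q a := fun a ha =>
    hprF a (hQF ▸ insert_subset_insert q (filter_subset _ _) ha)
  have hST : ∀ a ∈ S, a ∈ T := fun a ha => by
    obtain ⟨haF, hcls, -⟩ := mem_filter.mp ha
    exact mem_filter.mpr ⟨haF, hcls⟩
  have hS_le : ∀ a ∈ S, C.prF a ≤ #T + 1 := fun a ha =>
    ((C.bijF (cls q)).mapsTo (hST a ha)).2.trans (Nat.le_succ _)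
  have hne : ∀ a ∈ T, a ≠ q := fun a ha => ne_of_mem_of_not_mem (mem_filter.mp ha).1 hqF
  have happly : ∀ a ∈ S, C'.prF a =
      WithBot.unbotD (#T + 1) (({b ∈ S | C.prF a < C.prF b}).image C.prF).min := fun a ha => by
    rw [hprF' a (mem_insert_of_mem (hST a ha)), rotatedPrW, if_neg (hne a (hST a ha)), if_pos ha]
  have hself : C'.prF q = WithBot.unbotD (#T + 1) (S.image C.prF).min := by
    rw [hprF' q (mem_insert_self _ _), rotatedPrW, if_pos rfl]
  refine ⟨fun hq => hqF (mem_filter.mp hq).1, fun b hb => ?_, ?_, fun a ha b hb hab => ?_,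
    fun a ha => ?_, fun a ha haS => ?_⟩
  · rw [hself]
    exact unbotD_min_le_of_mem _ (mem_image_of_mem _ hb)
  · rw [hself]
    exact unbotD_min_le fun j hj => by
      obtain ⟨b, hb, rfl⟩ := mem_image.mp hj
      exact hS_le b hb
  · rw [happly a ha]
    exact unbotD_min_le_of_mem _ (mem_image_of_mem _ (mem_filter.mpr ⟨hb, hab⟩))
  · rw [happly a ha]
    exact unbotD_min_le fun j hj => by
      obtain ⟨b, hb, rfl⟩ := mem_image.mp hj
      exact hS_le b (mem_filter.mp hb).1
  · rw [hprF' a (mem_insert_of_mem ha)]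
    exact rotatedPrW_of_notMem (hne a ha) haS

theorem wbaseW_eq (h : WReleaseStep μ p pt C C' q) {w : Fin n → ℝ} (hw : ∀ a, w a = 2 ^ cls a)
    {a : Fin n} (ha : a ∈ (C.QF ∪ C.QP) \ C.QF.filter fun b => cls b = cls q) :
    wbaseW w C' a = wbaseW w C a := by
  obtain ⟨hqF, -, hQF, hQP, -, -, hprF, hprP⟩ := h
  obtain ⟨haFP, haT⟩ := mem_sdiff.mp ha
  rcases mem_union.mp haFP with haF | haP
  · have hcls : cls a ≠ cls q := fun hcls => haT (mem_filter.mpr ⟨haF, hcls⟩)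
    have haF' : a ∈ C'.QF := hQF ▸ mem_insert_of_mem haF
    rw [wbaseW_eq_of_mem_QF hw C haF, wbaseW_eq_of_mem_QF hw C' haF', hprF a haF',
      rotatedPrW_of_notMem (ne_of_mem_of_not_mem haF hqF) fun haS => hcls (mem_filter.mp haS).2.1]
  · have haP' : a ∈ C'.QP := hQP ▸ haP
    rw [wbaseW, wbaseW, if_neg (disjoint_right.mp C.disj haP),
      if_neg (disjoint_right.mp C'.disj haP'), hQP]
    refine sum_congr (filter_congr fun b hb => ?_) fun _ _ => rfl
    rw [hprP b hb, hprP a haP]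

theorem restCovW_eq (h : WReleaseStep μ p pt C C' q) {w : Fin n → ℝ}
    (hw : ∀ a, w a = 2 ^ cls a) : restCovW w C' (cls q) = restCovW w C (cls q) := by
  have hset : (C'.QF ∪ C'.QP) \ C'.QF.filter (fun a => cls a = cls q) =
      (C.QF ∪ C.QP) \ C.QF.filter fun a => cls a = cls q := by
    rw [h.filter_QF_cls_eq, h.2.2.1, h.2.2.2.1, insert_union, insert_sdiff_insert]
    exact sdiff_insert_of_notMem (fun hq => (mem_union.mp hq).elim h.1 h.2.1) _
  funext y
  rw [restCovW, restCovW, hset]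
  refine sum_congr rfl fun a ha => ?_
  have haq : a ≠ q := fun haq => (mem_union.mp (mem_sdiff.mp (haq ▸ ha)).1).elim h.1 h.2.1
  rw [h.wbaseW_eq hw ha, h.2.2.2.2.2.1 a haq]

theorem sum_filter_le_sum_filter (h : WReleaseStep μ p pt C C' q) (hp : ∀ a, 0 ≤ p a)
    (hdist : ∀ a, pt a ≤ p a ∧ p a < μ * pt a) (N : ℕ) :
    ∑ a ∈ C.QF.filter (fun b => cls b = cls q) with C.prF a ≤ N, p a ≤
      ∑ a ∈ insert q (C.QF.filter fun b => cls b = cls q) with C'.prF a ≤ N, p a :=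
  h.isChainShift.sum_filter_le_sum_filter (C.bijF (cls q)).injOn (fun a _ => hp a)
    (fun _ ha => le_of_mem_violators hdist ha) N

theorem sum_filter_add_le_sum_filter (h : WReleaseStep μ p pt C C' q) (hp : ∀ a, 0 ≤ p a)
    (hpt : 0 < pt q) (hdist : ∀ a, pt a ≤ p a ∧ p a < μ * pt a) (N : ℕ) :
    ∑ a ∈ C.QF.filter (fun b => cls b = cls q) with C.prF a ≤ N, p a + p q ≤
      ∑ a ∈ insert q (C.QF.filter fun b => cls b = cls q) with C'.prF a ≤ N + ⌈μ ^ 2⌉₊, p a := by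
  have hμ : 0 < μ := by nlinarith [hdist q]
  have hTS : ∀ a ∈ C.QF.filter (fun b => cls b = cls q),
      a ∉ C.QF.filter (fun b => cls b = cls q ∧ μ * pt b ≤ pt q) → pt q / μ ≤ p a := by
    intro a ha haS
    have hnv : pt q < μ * pt a := not_le.mp fun hle =>
      haS (mem_filter.mpr ⟨(mem_filter.mp ha).1, (mem_filter.mp ha).2, hle⟩)
    rw [div_le_iff₀ hμ]
    nlinarith [hdist a]
  exact h.isChainShift.sum_filter_add_le_sum_filter (C.bijF (cls q)) (fun a _ => hp a)
    (fun _ ha => le_of_mem_violators hdist ha) hTS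
    ((hdist q).2.le.trans (mul_le_natCeil_sq_mul_div hμ hpt.le)) N

end WReleaseStep

theorem wrelease_cov_bounds_general
    (n : ℕ) (μ : ℝ) (p pt w : Fin n → ℝ) (cls : Fin n → ℤ)
    (hp : ∀ q, 0 < p q) (hpt : ∀ q, 0 < pt q)
    (hw : ∀ q, w q = 2 ^ cls q)
    (hdist : ∀ q, pt q ≤ p q ∧ p q < μ * pt q)
    (C C' : WConfig n cls) (q : Fin n)
    (hfull : ∀ a ∈ C.QF, C.rem a = p a)
    (hrem : ∀ a, 0 ≤ C.rem a)
    (hstep : WReleaseStep μ p pt C C' q) :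
    ∀ x : ℝ, 0 ≤ x →
      covW w C x ≤ covW w C' x ∧
      covW w C x + p q ≤ covW w C' (x + ((⌈μ ^ 2⌉ : ℤ) : ℝ) * w q) := by
  intro x hx
  have hW : (0 : ℝ) < 2 ^ cls q := zpow_pos two_pos _
  have hθ : ((⌈μ ^ 2⌉ : ℤ) : ℝ) = ⌈μ ^ 2⌉₊ := (natCast_ceil_eq_intCast_ceil (sq_nonneg μ)).symm
  have hx' : x ≤ x + ⌈μ ^ 2⌉₊ * w q := le_add_of_nonneg_right (by rw [hw]; positivity)
  have hfloor : ⌊(x + ⌈μ ^ 2⌉₊ * w q) / 2 ^ cls q⌋₊ = ⌊x / 2 ^ cls q⌋₊ + ⌈μ ^ 2⌉₊ := by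
    rw [hw, add_div, mul_div_cancel_right₀ _ hW.ne', Nat.floor_add_natCast (div_nonneg hx hW.le)]
  have hfull' := hstep.rem_eq_of_mem_QF hfull
  have hp0 : ∀ a, 0 ≤ p a := fun a => (hp a).le
  rw [hθ, covW_eq_restCovW_add hw C hfull (cls q) hx, covW_eq_restCovW_add hw C' hfull' (cls q) hx,
    covW_eq_restCovW_add hw C' hfull' (cls q) (hx.trans hx'), hstep.restCovW_eq hw,
    hstep.filter_QF_cls_eq, hfloor]
  constructor
  · linarith [hstep.sum_filter_le_sum_filter hp0 hdist ⌊x / 2 ^ cls q⌋₊]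
  · linarith [hstep.sum_filter_add_le_sum_filter hp0 (hpt q) hdist ⌊x / 2 ^ cls q⌋₊,
      restCovW_mono (w := w) hrem (cls q) hx']

/-- In a run of Algorithm 3 on an SPPT instance with distortion at
most `μ` (weights being powers of two, the full bins containing only full jobs and no
violations), if a job `q` is released at time `t` then, with `θ = ⌈μ²⌉`, for every
`x ≥ 0`: (1) `cov(x, t) ≥ cov(x, t⁻)`, and
(2) `cov(x + θ·w(q), t) ≥ cov(x, t⁻) + p(q)`. -/
theorem wrelease_cov_bounds
    (n : ℕ) (μ : ℝ) (p pt w : Fin n → ℝ) (cls : Fin n → ℤ)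
    (hp : ∀ q, 0 < p q) (hpt : ∀ q, 0 < pt q)
    (hw : ∀ q, w q = 2 ^ cls q)
    (hdist : ∀ q, pt q ≤ p q ∧ p q < μ * pt q)
    (C C' : WConfig n cls) (q : Fin n)
    (hfull : ∀ a ∈ C.QF, C.rem a = p a)
    (hrem : ∀ a, 0 ≤ C.rem a)
    (hnv : ∀ q₁ q₂, q₁ ∈ C.QF → q₂ ∈ C.QF → cls q₁ = cls q₂ →
      C.prF q₂ < C.prF q₁ → ¬ (μ * pt q₂ ≤ pt q₁))
    (hstep : WReleaseStep μ p pt C C' q) :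
    ∀ x : ℝ, 0 ≤ x →
      covW w C x ≤ covW w C' x ∧
      covW w C x + p q ≤ covW w C' (x + ((⌈μ ^ 2⌉ : ℤ) : ℝ) * w q) :=
  wrelease_cov_bounds_general n μ p pt w cls hp hpt hw hdist C C' q hfull hrem hstep
end
end

section
/- Run Algorithm 3 on an SPPT instance with distortion at most μ. For any real x ≥ 0 and time t, if cov(x,t) is strictly decreasing at t due to the algorithm's processing of a job (i.e., the job currently being processed has positive volume covered by x), then cov(x,t) = V(t), the total remaining processing time of all jobs pending in the algorithm at t. -/
/-!
The weight below any pending job is at most the weight of its own bin, hence, since full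
bins never outweigh their partial bins, at most the weight of the heaviest partial bin.
The processed job is the top of that bin, so its `wbase` is exactly this maximum; a bar
covering it therefore covers every pending job.
-/

open MeasureTheory
open scoped Classical

noncomputable section

variable {n : ℕ} {cls : Fin n → ℤ}

section Coverage

variable (w : Fin n → ℝ) (C : WConfig n cls)

theorem wbaseW_le_binWeightF (hw : ∀ a, 0 ≤ w a) {a : Fin n} (ha : a ∈ C.QF) :
    wbaseW w C a ≤ binWeightF w C (cls a) := by
  rw [wbaseW, if_pos ha, binWeightF]
  refine Finset.sum_le_sum_of_subset_of_nonneg ?_ fun b _ _ => hw b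
  exact Finset.monotone_filter_right _ fun _ _ hb => hb.1

theorem wbaseW_le_binWeightP (hw : ∀ a, 0 ≤ w a) {a : Fin n} (ha : a ∈ C.QP) :
    wbaseW w C a ≤ binWeightP w C (cls a) := by
  have haF : a ∉ C.QF := Finset.disjoint_right.mp C.disj ha
  rw [wbaseW, if_neg haF, binWeightP]
  refine Finset.sum_le_sum_of_subset_of_nonneg ?_ fun b _ _ => hw b
  exact Finset.monotone_filter_right _ fun _ _ hb => hb.1

theorem wbaseW_eq_binWeightP_of_top {q : Fin n} (hq : q ∈ C.QP)
    (htop : C.prP q = (C.QP.filter fun a => cls a = cls q).card) :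
    wbaseW w C q = binWeightP w C (cls q) := by
  have hqF : q ∉ C.QF := Finset.disjoint_right.mp C.disj hq
  rw [wbaseW, if_neg hqF, binWeightP]
  refine Finset.sum_congr (Finset.filter_congr fun a ha => ?_) fun _ _ => rfl
  refine and_iff_left_of_imp fun hcls => htop ▸ ((C.bijP (cls q)).mapsTo ?_).2
  exact Finset.mem_filter.mpr ⟨ha, hcls⟩

theorem wbaseW_le_max_binWeightP (hw : ∀ a, 0 ≤ w a)
    (hbal : ∀ i, binWeightF w C i ≤ binWeightP w C i) {j : ℤ}
    (hmax : ∀ i, binWeightP w C i ≤ binWeightP w C j) {a : Fin n} (ha : a ∈ C.QF ∪ C.QP) :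
    wbaseW w C a ≤ binWeightP w C j := by
  rcases Finset.mem_union.mp ha with haF | haP
  · exact (wbaseW_le_binWeightF w C hw haF).trans ((hbal _).trans (hmax _))
  · exact (wbaseW_le_binWeightP w C hw haP).trans (hmax _)

theorem covW_eq_volW_of_forall_wbaseW_le {x : ℝ}
    (h : ∀ a ∈ C.QF ∪ C.QP, wbaseW w C a ≤ x) : covW w C x = volW C :=
  Finset.sum_congr rfl fun a ha => if_pos (h a ha)

end Coverage

theorem wprocessing_covers_everything_general
    (n : ℕ) (w : Fin n → ℝ) (cls : Fin n → ℤ)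
    (hw : ∀ q, w q = 2 ^ cls q)
    (C : WConfig n cls)
    (hbal : ∀ i, binWeightF w C i ≤ binWeightP w C i)
    (x : ℝ)
    (q : Fin n) (hq : q ∈ C.QP)
    (htop : C.prP q = (C.QP.filter fun a => cls a = cls q).card)
    (hmax : ∀ i, binWeightP w C i ≤ binWeightP w C (cls q))
    (hcovered : wbaseW w C q ≤ x) :
    covW w C x = volW C := by
  have hw_nonneg : ∀ a, 0 ≤ w a := fun a => hw a ▸ by positivity
  rw [wbaseW_eq_binWeightP_of_top w C hq htop] at hcovered
  exact covW_eq_volW_of_forall_wbaseW_le w C fun a ha =>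
    (wbaseW_le_max_binWeightP w C hw_nonneg hbal hmax ha).trans hcovered

/-- In a run of Algorithm 3 on an SPPT instance with distortion at
most `μ` (weights being powers of two; every full bin weighs at most its partial bin),
if `cov(x, t)` is strictly decreasing at `t` due to the processing of a job — i.e. the
currently processed job (the top-priority job of the heaviest partial bin) has
positive volume covered by the bar `x` — then `cov(x, t) = V(t)`. -/
theorem wprocessing_covers_everything
    (n : ℕ) (μ : ℝ) (p pt w : Fin n → ℝ) (cls : Fin n → ℤ)
    (hp : ∀ q, 0 < p q) (hpt : ∀ q, 0 < pt q)
    (hw : ∀ q, w q = 2 ^ cls q)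
    (hdist : ∀ q, pt q ≤ p q ∧ p q < μ * pt q)
    (C : WConfig n cls)
    (hbal : ∀ i, binWeightF w C i ≤ binWeightP w C i)
    (x : ℝ) (hx : 0 ≤ x)
    (q : Fin n) (hq : q ∈ C.QP)
    (htop : C.prP q = (C.QP.filter fun a => cls a = cls q).card)
    (hmax : ∀ i, binWeightP w C i ≤ binWeightP w C (cls q))
    (hcovered : wbaseW w C q ≤ x) (hpos : 0 < C.rem q) :
    covW w C x = volW C :=
  wprocessing_covers_everything_general n w cls hw C hbal x q hq htop hmax hcovered
end
end
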